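/- Let m ∈ ℤ∖{0} and let h : ℝ → ℂ be continuous, not identically zero, and satisfy |h(t)| ≤ C·(1+|t|)^{−2} for some constant C > 0 and all t ∈ ℝ. Then the 2|m| functions θ₁(h), θ₂(h), …, θ_{2|m|}(h) : ℝ³ → ℂ are linearly independent over ℂ. -/

import Mathlib

/-!
On the line `(x, 0, z)` the theta transform `θ_β(h)` is the absolutely convergent Fourier series
`z ↦ ∑ₖ h(x + k + β/(2m)) e((2km + β) z)`. Its `α`-th Fourier coefficient on `[0, 1]` only sees
the `k` with `2km + β = α`, and for `α, β ∈ [1, 2|m|]` this forces `k = 0` and `β = α`. Choosing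
`x` with `h(x + α/(2m)) ≠ 0`, the functional `F ↦ ∫₀¹ F(x, 0, z) e(-αz) dz` therefore kills every
`θ_β(h)` with `β ≠ α` but not `θ_α(h)`.
-/

noncomputable section

/-- `e(x) = exp(2πix)`. -/
def e (x : ℝ) : ℂ := Complex.exp (2 * Real.pi * Complex.I * x)

/-- The theta transform
`θ_α(h)(x,y,z) = Σ_{k∈ℤ} e(m·y + (2km+α)·z)·h(x + k + α/(2m))`,
as a function on `ℝ³`. -/
def thetaFun (m α : ℤ) (h : ℝ → ℂ) : ℝ × ℝ × ℝ → ℂ :=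
  fun p => ∑' k : ℤ, e ((m : ℝ) * p.2.1 + ((2 * k * m + α : ℤ) : ℝ) * p.2.2) *
    h (p.1 + (k : ℝ) + (α : ℝ) / (2 * (m : ℝ)))

open MeasureTheory Set

@[fun_prop]
lemma continuous_e : Continuous e := by
  unfold e; fun_prop

lemma norm_e (x : ℝ) : ‖e x‖ = 1 := by
  simp [e, Complex.norm_exp, mul_comm]

lemma e_add (x y : ℝ) : e (x + y) = e x * e y := by
  simp only [e, ← Complex.exp_add]
  push_cast
  ring_nf

lemma integral_e_intCast_mul (n : ℤ) :
    ∫ z in (0 : ℝ)..1, e (n * z) = if n = 0 then 1 else 0 := by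
  split_ifs with hn
  · simp [hn, e]
  · have hc : (2 * Real.pi * Complex.I * n : ℂ) ≠ 0 := by simp [Real.pi_ne_zero, hn]
    have hexp : ∀ z : ℝ, e (n * z) = Complex.exp (2 * Real.pi * Complex.I * n * z) := by
      intro z; simp only [e]; push_cast; ring_nf
    simp only [hexp, integral_exp_mul_complex hc, Complex.ofReal_one, mul_one,
      Complex.ofReal_zero, mul_zero, Complex.exp_zero]
    rw [show 2 * Real.pi * Complex.I * n = n * (2 * Real.pi * Complex.I) by ring,
      Complex.exp_int_mul_two_pi_mul_I, sub_self, zero_div]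

lemma summable_norm_comp_int_add {h : ℝ → ℂ} {C : ℝ} (hC : 0 ≤ C)
    (hd : ∀ t, ‖h t‖ ≤ C / (1 + |t|) ^ 2) (y : ℝ) :
    Summable fun k : ℤ => ‖h (k + y)‖ := by
  refine Summable.of_norm_bounded_eventually
    (((Real.summable_one_div_int_add_rpow y 2).2 one_lt_two).mul_left C) ?_
  have hfin : {k : ℤ | (k : ℝ) + y = 0}.Finite :=
    Set.Subsingleton.finite fun a ha b hb => by
      exact_mod_cast add_right_cancel (ha.trans hb.symm)
  filter_upwards [hfin.compl_mem_cofinite] with k hk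
  have hpos : 0 < |(k : ℝ) + y| := abs_pos.2 hk
  calc ‖‖h (k + y)‖‖ ≤ C / (1 + |(k : ℝ) + y|) ^ 2 := by rw [norm_norm]; exact hd _
    _ ≤ C / |(k : ℝ) + y| ^ 2 := by gcongr; linarith
    _ = C * (1 / |(k : ℝ) + y| ^ (2 : ℝ)) := by rw [Real.rpow_two]; ring

section FourierSeries

variable (n : ℤ → ℤ) {a : ℤ → ℂ}

lemma continuous_tsum_e_mul (ha : Summable fun k => ‖a k‖) :
    Continuous fun z : ℝ => ∑' k, e (n k * z) * a k :=
  continuous_tsum (fun k => by fun_prop) ha fun k z => by rw [norm_mul, norm_e, one_mul]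

lemma integral_tsum_e_mul_mul_e (ha : Summable fun k => ‖a k‖) (α : ℤ) :
    ∫ z in (0 : ℝ)..1, (∑' k, e (n k * z) * a k) * e (-α * z) =
      ∑' k, if n k = α then a k else 0 := by
  have hsum : HasSum (fun k => ∫ z in (0 : ℝ)..1, e (n k * z) * a k * e (-α * z))
      (∫ z in (0 : ℝ)..1, (∑' k, e (n k * z) * a k) * e (-α * z)) := by
    simp_rw [← tsum_mul_right]
    refine intervalIntegral.hasSum_integral_of_dominated_convergence (fun k _ => ‖a k‖)
      (fun k => (by fun_prop : Continuous _).aestronglyMeasurable) (fun k => ?_)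
      (.of_forall fun _ _ => ha) intervalIntegrable_const
      (.of_forall fun z _ => (ha.of_norm_bounded fun k => ?_).hasSum) <;>
    simp [norm_e]
  rw [← hsum.tsum_eq]
  refine tsum_congr fun k => ?_
  have hterm : ∀ z : ℝ, e (n k * z) * a k * e (-α * z) = e ((n k - α : ℤ) * z) * a k := by
    intro z
    rw [mul_right_comm, ← e_add]
    push_cast
    ring_nf
  simp only [hterm, intervalIntegral.integral_mul_const, integral_e_intCast_mul, sub_eq_zero]
  split_ifs <;> simp

end FourierSeries

lemma thetaFun_apply_zero (m β : ℤ) (h : ℝ → ℂ) (x z : ℝ) :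
    thetaFun m β h (x, 0, z) =
      ∑' k : ℤ, e ((2 * k * m + β : ℤ) * z) * h (k + (x + β / (2 * m))) := by
  simp only [thetaFun, mul_zero, zero_add, add_left_comm x, add_assoc]

lemma two_mul_mul_add_eq_iff {m k α β : ℤ} (hα : α ∈ Icc 1 (2 * |m|))
    (hβ : β ∈ Icc 1 (2 * |m|)) : 2 * k * m + β = α ↔ k = 0 ∧ β = α := by
  refine ⟨fun he => ?_, fun ⟨hk, hβα⟩ => by simp [hk, hβα]⟩
  have hk : |k| * (2 * |m|) < 1 * (2 * |m|) := by
    rw [show |k| * (2 * |m|) = |α - β| by rw [← he]; simp [abs_mul]; ring, one_mul]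
    exact abs_sub_lt_iff.2 ⟨by linarith [hα.2, hβ.1], by linarith [hα.1, hβ.2]⟩
  obtain rfl : k = 0 := Int.abs_lt_one_iff.1 (lt_of_mul_lt_mul_right hk (by positivity))
  exact ⟨rfl, by simpa using he⟩

lemma linearIndependent_of_integral_biorthogonal {ι X : Type*} [Fintype ι] [DecidableEq ι]
    (f : ι → X → ℂ) (γ : ι → ℝ → X) (φ : ι → ℝ → ℂ) (c : ι → ℂ) (hc : ∀ i, c i ≠ 0)
    (hint : ∀ i j, IntervalIntegrable (fun z => f j (γ i z) * φ i z) volume 0 1)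
    (hdual : ∀ i j, ∫ z in (0 : ℝ)..1, f j (γ i z) * φ i z = if j = i then c i else 0) :
    LinearIndependent ℂ f := by
  refine Fintype.linearIndependent_iff.2 fun g hg i => ?_
  have hcomb : ∀ z, ∑ j, g j * (f j (γ i z) * φ i z) = 0 := fun z => by
    have hgz := congrFun hg (γ i z)
    simp only [Finset.sum_apply, Pi.smul_apply, smul_eq_mul, Pi.zero_apply] at hgz
    simp_rw [← mul_assoc, ← Finset.sum_mul, hgz, zero_mul]
  have hgc : g i * c i = 0 := by
    have := intervalIntegral.integral_finsetSum (a := 0) (b := 1) (s := Finset.univ)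
      fun j _ => (hint i j).const_mul (g j)
    simpa [hcomb, hdual] using this.symm
  exact (mul_eq_zero.1 hgc).resolve_right (hc i)

lemma integral_thetaFun_mul_e {m α β : ℤ} {h : ℝ → ℂ}
    (hsum : ∀ y, Summable fun k : ℤ => ‖h (k + y)‖)
    (hα : α ∈ Icc 1 (2 * |m|)) (hβ : β ∈ Icc 1 (2 * |m|)) (x : ℝ) :
    ∫ z in (0 : ℝ)..1, thetaFun m β h (x, 0, z) * e (-α * z) =
      if β = α then h (x + β / (2 * m)) else 0 := by
  simp only [thetaFun_apply_zero]
  rw [integral_tsum_e_mul_mul_e _ (hsum _)]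
  simp only [two_mul_mul_add_eq_iff hα hβ, ite_and]
  rw [tsum_eq_single 0 fun k hk => if_neg hk]
  simp

theorem statement18_general (m : ℤ) (h : ℝ → ℂ)
    (hne : h ≠ 0)
    (hdecay : ∃ C : ℝ, 0 < C ∧ ∀ t : ℝ, ‖h t‖ ≤ C / (1 + |t|) ^ 2) :
    LinearIndependent ℂ
      (fun a : Fin (2 * m.natAbs) => thetaFun m ((a : ℕ) + 1 : ℤ) h) := by
  obtain ⟨C, hC, hd⟩ := hdecay
  obtain ⟨x₀, hx₀⟩ := Function.ne_iff.1 hne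
  have hsum := summable_norm_comp_int_add hC.le hd
  set β : Fin (2 * m.natAbs) → ℤ := fun a => (a : ℕ) + 1
  have hβ : ∀ a, β a ∈ Icc 1 (2 * |m|) := fun a => by
    have := a.2
    simp only [β, mem_Icc, Int.abs_eq_natAbs]
    omega
  refine linearIndependent_of_integral_biorthogonal _ (fun i z => (x₀ - β i / (2 * m), 0, z))
    (fun i z => e (-β i * z)) (fun _ => h x₀) (fun _ => hx₀) (fun i j => ?_) (fun i j => ?_)
  · simp only [thetaFun_apply_zero]
    exact ((continuous_tsum_e_mul _ (hsum _)).mul (by fun_prop)).intervalIntegrable _ _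
  · rw [integral_thetaFun_mul_e hsum (hβ i) (hβ j)]
    rcases eq_or_ne j i with rfl | hji <;> simp [β, Fin.val_inj, *]

theorem statement18 (m : ℤ) (hm : m ≠ 0) (h : ℝ → ℂ)
    (hcont : Continuous h) (hne : h ≠ 0)
    (hdecay : ∃ C : ℝ, 0 < C ∧ ∀ t : ℝ, ‖h t‖ ≤ C / (1 + |t|) ^ 2) :
    LinearIndependent ℂ
      (fun a : Fin (2 * m.natAbs) => thetaFun m ((a : ℕ) + 1 : ℤ) h) :=
  statement18_general m h hne hdecay

end
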